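/- arXiv:2406.00647 — 3 statements merged into one kernel-verified Lean document; each statement's English description precedes it below -/
import Mathlib

section
/- Suppose there exists α ∈ (0,∞) such that for all β < γ, n(r_n(γ)^d − r_n(β)^d) → α(γ − β) as n → ∞, and suppose (X_n) is a family of nonnegative random variables with P[X_n ≤ r_n(β)] → exp(−e^{−β}) for every β ∈ ℝ. Then n X_n^d − n μ(X_n)^d converges in distribution to α(Gu + log log 2), where μ(X_n) is a median of X_n and Gu is a standard Gumbel random variable. -/
open MeasureTheory Filter Topology
open scoped ENNReal ProbabilityTheory

/-!
Let `G β = exp (-e^{-β})` and `β₀ = -log log 2`, so that `G β₀ = 1/2`. Since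
`P[X_n ≤ r_n(β)] → G β`, the median `m_n` of `X_n` eventually lies between `r_n(β)` and `r_n(γ)`
for any `β < β₀ < γ`; by the hypothesis on `r_n` this gives `n r_n(γ)^d − n m_n^d → α(γ − β₀)`.
Hence, for `β < β₀ + x/α < γ`, eventually
`{X_n ≤ r_n(β)} ⊆ {n X_n^d − n m_n^d ≤ x} ⊆ {X_n ≤ r_n(γ)}`, and continuity of `G` squeezes
the probability of the middle event to `G (β₀ + x/α)`.
-/

theorem tendsto_of_eventually_between {g : ℝ → ℕ → ℝ} {G : ℝ → ℝ} {f : ℕ → ℝ} {x₀ : ℝ}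
    (hg : ∀ β, Tendsto (g β) atTop (𝓝 (G β))) (hG : ContinuousAt G x₀)
    (hf : ∀ β γ, β < x₀ → x₀ < γ → ∀ᶠ n in atTop, g β n ≤ f n ∧ f n ≤ g γ n) :
    Tendsto f atTop (𝓝 (G x₀)) := by
  refine tendsto_order.2 ⟨fun a ha => ?_, fun b hb => ?_⟩
  · obtain ⟨β, hGβ, hβ⟩ :=
      ((hG.tendsto.mono_left nhdsWithin_le_nhds).eventually (lt_mem_nhds ha)).and
        (self_mem_nhdsWithin (s := Set.Iio x₀)) |>.exists
    filter_upwards [(hg β).eventually (lt_mem_nhds hGβ), hf β (x₀ + 1) hβ (lt_add_one x₀)]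
      with n hn hfn
    exact hn.trans_le hfn.1
  · obtain ⟨γ, hGγ, hγ⟩ :=
      ((hG.tendsto.mono_left nhdsWithin_le_nhds).eventually (gt_mem_nhds hb)).and
        (self_mem_nhdsWithin (s := Set.Ioi x₀)) |>.exists
    filter_upwards [(hg γ).eventually (gt_mem_nhds hGγ), hf (x₀ - 1) γ (sub_one_lt x₀) hγ]
      with n hn hfn
    exact hfn.2.trans_lt hn

theorem tendsto_sub_of_forall_lt {u : ℝ → ℕ → ℝ} {α : ℝ}
    (hu : ∀ β γ, β < γ → Tendsto (fun n => u γ n - u β n) atTop (𝓝 (α * (γ - β))))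
    (β γ : ℝ) : Tendsto (fun n => u γ n - u β n) atTop (𝓝 (α * (γ - β))) := by
  rcases lt_trichotomy β γ with h | rfl | h
  · exact hu β γ h
  · simp
  · rw [show α * (γ - β) = -(α * (β - γ)) by ring]
    simpa using (hu γ β h).neg

theorem tendsto_sub_of_eventually_between {u : ℝ → ℕ → ℝ} {s : ℕ → ℝ} {α β₀ : ℝ}
    (hu : ∀ β γ, β < γ → Tendsto (fun n => u γ n - u β n) atTop (𝓝 (α * (γ - β))))
    (hs : ∀ β γ, β < β₀ → β₀ < γ → ∀ᶠ n in atTop, u β n ≤ s n ∧ s n ≤ u γ n) (γ : ℝ) :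
    Tendsto (fun n => u γ n - s n) atTop (𝓝 (α * (γ - β₀))) := by
  have hs₀ : Tendsto (fun n => s n - u β₀ n) atTop (𝓝 (α * (β₀ - β₀))) :=
    tendsto_of_eventually_between (G := fun γ => α * (γ - β₀))
      (tendsto_sub_of_forall_lt hu β₀) (by fun_prop)
      fun β γ hβ hγ => (hs β γ hβ hγ).mono fun n hn => ⟨by linarith, by linarith⟩
  simpa using (tendsto_sub_of_forall_lt hu β₀ γ).sub hs₀

section Median

variable {Ω : Type*} [MeasurableSpace Ω] {μ : Measure Ω}

noncomputable def median (μ : Measure Ω) (Y : Ω → ℝ) : ℝ :=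
  sInf {t : ℝ | (1 : ℝ≥0∞) / 2 ≤ μ {ω | Y ω ≤ t}}

theorem median_le {Y : Ω → ℝ} (hY : ∀ ω, 0 ≤ Y ω) {t : ℝ} (ht : 1 / 2 ≤ μ {ω | Y ω ≤ t}) :
    median μ Y ≤ t := by
  refine csInf_le ⟨0, fun s hs => ?_⟩ ht
  by_contra! hs₀
  have : {ω | Y ω ≤ s} = ∅ :=
    Set.eq_empty_of_forall_notMem fun ω hω => (hs₀.trans_le (hY ω)).not_ge hω
  simp [this] at hs

theorem le_median {Y : Ω → ℝ} {s t : ℝ} (ht : 1 / 2 ≤ μ {ω | Y ω ≤ t})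
    (hs : μ {ω | Y ω ≤ s} < 1 / 2) : s ≤ median μ Y := by
  refine le_csInf ⟨t, ht⟩ fun t' ht' => ?_
  by_contra! h
  exact (ht'.trans (measure_mono fun ω hω => le_trans hω h.le)).not_gt hs

theorem eventually_le_median_le [IsFiniteMeasure μ] {Y : ℕ → Ω → ℝ} (hY : ∀ n ω, 0 ≤ Y n ω)
    {a b : ℕ → ℝ} {p q : ℝ} (ha : Tendsto (fun n => (μ {ω | Y n ω ≤ a n}).toReal) atTop (𝓝 p))
    (hb : Tendsto (fun n => (μ {ω | Y n ω ≤ b n}).toReal) atTop (𝓝 q)) (hp : p < 1 / 2)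
    (hq : 1 / 2 < q) : ∀ᶠ n in atTop, a n ≤ median μ (Y n) ∧ median μ (Y n) ≤ b n := by
  have hhalf : (1 : ℝ≥0∞) / 2 = ENNReal.ofReal (1 / 2) := by
    rw [ENNReal.ofReal_div_of_pos two_pos]; simp
  filter_upwards [ha.eventually (gt_mem_nhds hp), hb.eventually (lt_mem_nhds hq)] with n hpn hqn
  have hbn : 1 / 2 ≤ μ {ω | Y n ω ≤ b n} := hhalf ▸ ENNReal.ofReal_le_of_le_toReal hqn.le
  refine ⟨le_median hbn ?_, median_le (hY n) hbn⟩
  rwa [hhalf, ENNReal.lt_ofReal_iff_toReal_lt (measure_ne_top _ _)]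

end Median

theorem setOf_le_subset_setOf_mul_pow_sub_le {Ω : Type*} {Y : Ω → ℝ} (hY : ∀ ω, 0 ≤ Y ω)
    {n d : ℕ} {a c x : ℝ} (h : n * a ^ d - c < x) :
    {ω | Y ω ≤ a} ⊆ {ω | n * Y ω ^ d - c ≤ x} := fun ω (hω : Y ω ≤ a) =>
  show (n : ℝ) * Y ω ^ d - c ≤ x by
    have : (n : ℝ) * Y ω ^ d ≤ n * a ^ d := by gcongr; exact hY ω
    linarith

theorem setOf_mul_pow_sub_le_subset_setOf_le {Ω : Type*} {Y : Ω → ℝ} {n d : ℕ} {b c x : ℝ}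
    (hb : 0 ≤ b) (h : x < n * b ^ d - c) :
    {ω | n * Y ω ^ d - c ≤ x} ⊆ {ω | Y ω ≤ b} := fun ω (hω : n * Y ω ^ d - c ≤ x) => by
  have : (n : ℝ) * Y ω ^ d < n * b ^ d := by linarith
  exact (lt_of_pow_lt_pow_left₀ d hb (lt_of_mul_lt_mul_left this n.cast_nonneg)).le

theorem tendsto_mul_pow_sub_median {Ω : Type*} [MeasurableSpace Ω] {μ : Measure Ω}
    [IsFiniteMeasure μ] {G : ℝ → ℝ} (hG : StrictMono G) {β₀ : ℝ} (hGβ₀ : G β₀ = 1 / 2)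
    {d : ℕ} {α : ℝ} {r : ℕ → ℝ → ℝ} (hr : ∀ n β, 0 ≤ r n β)
    {X : ℕ → Ω → ℝ} (hX : ∀ n ω, 0 ≤ X n ω)
    (hdiff : ∀ β γ : ℝ, β < γ →
      Tendsto (fun n : ℕ => (n : ℝ) * (r n γ ^ d - r n β ^ d)) atTop (𝓝 (α * (γ - β))))
    (hcdf : ∀ β, Tendsto (fun n => (μ {ω | X n ω ≤ r n β}).toReal) atTop (𝓝 (G β)))
    (γ : ℝ) :
    Tendsto (fun n : ℕ => (n : ℝ) * r n γ ^ d - n * median μ (X n) ^ d) atTop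
      (𝓝 (α * (γ - β₀))) := by
  refine tendsto_sub_of_eventually_between (u := fun β n => n * r n β ^ d)
    (fun β γ h => by simpa only [mul_sub] using hdiff β γ h) (fun β γ hβ hγ => ?_) γ
  have hmed := eventually_le_median_le hX (hcdf β) (hcdf γ)
    (hGβ₀ ▸ hG hβ) (hGβ₀ ▸ hG hγ)
  refine hmed.mono fun n ⟨hβn, hγn⟩ => ⟨?_, ?_⟩
  · gcongr; exact hr n β
  · gcongr; exact (hr n β).trans hβn

noncomputable def gumbelCDF (β : ℝ) : ℝ := Real.exp (-Real.exp (-β))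

theorem continuous_gumbelCDF : Continuous gumbelCDF := by
  unfold gumbelCDF; fun_prop

theorem strictMono_gumbelCDF : StrictMono gumbelCDF := fun _ _ h =>
  Real.exp_lt_exp.2 (neg_lt_neg (Real.exp_lt_exp.2 (neg_lt_neg h)))

theorem gumbelCDF_neg_log_log_two : gumbelCDF (-Real.log (Real.log 2)) = 1 / 2 := by
  rw [gumbelCDF, neg_neg, Real.exp_log (Real.log_pos one_lt_two), Real.exp_neg,
    Real.exp_log two_pos, one_div]

theorem stmt5_general {Ω : Type*} [MeasureSpace Ω] [IsProbabilityMeasure (ℙ : Measure Ω)]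
    (d : ℕ) (α : ℝ) (hα : 0 < α)
    (r : ℕ → ℝ → ℝ) (hrpos : ∀ n β, 0 < r n β)
    (X : ℕ → Ω → ℝ) (hXpos : ∀ n ω, 0 ≤ X n ω)
    (hdiff : ∀ β γ : ℝ, β < γ →
      Tendsto (fun n : ℕ => (n : ℝ) * (r n γ ^ d - r n β ^ d)) atTop
        (nhds (α * (γ - β))))
    (hcdf : ∀ β : ℝ,
      Tendsto (fun n : ℕ => (ℙ {ω | X n ω ≤ r n β}).toReal) atTop
        (nhds (Real.exp (-Real.exp (-β))))) :
    ∀ x : ℝ,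
      Tendsto (fun n : ℕ =>
          (ℙ {ω | (n : ℝ) * X n ω ^ d
              - (n : ℝ) * (sInf {t : ℝ | (1 : ℝ≥0∞) / 2 ≤ ℙ {ω' | X n ω' ≤ t}}) ^ d ≤ x}).toReal)
        atTop
        (nhds (Real.exp (-Real.exp (-(-Real.log (Real.log 2) + x / α))))) := by
  intro x
  set β₀ := -Real.log (Real.log 2)
  have hcenter := tendsto_mul_pow_sub_median strictMono_gumbelCDF gumbelCDF_neg_log_log_two
    (fun n β => (hrpos n β).le) hXpos hdiff hcdf
  change Tendsto (fun n : ℕ => (ℙ {ω | (n : ℝ) * X n ω ^ d - n * median ℙ (X n) ^ d ≤ x}).toReal)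
    atTop (𝓝 (gumbelCDF (β₀ + x / α)))
  refine tendsto_of_eventually_between hcdf continuous_gumbelCDF.continuousAt
    fun β γ hβ hγ => ?_
  have hβx : α * (β - β₀) < x := (lt_div_iff₀' hα).1 (by linarith)
  have hγx : x < α * (γ - β₀) := (div_lt_iff₀' hα).1 (by linarith)
  filter_upwards [(hcenter β).eventually (gt_mem_nhds hβx),
    (hcenter γ).eventually (lt_mem_nhds hγx)] with n hβn hγn
  exact ⟨ENNReal.toReal_mono (measure_ne_top _ _)
      (measure_mono (setOf_le_subset_setOf_mul_pow_sub_le (hXpos n) hβn)),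
    ENNReal.toReal_mono (measure_ne_top _ _)
      (measure_mono (setOf_mul_pow_sub_le_subset_setOf_le (hrpos n γ).le hγn))⟩

/-- If `n (r_n(γ)^d − r_n(β)^d) → α(γ−β)` for all `β < γ` and
`P[X_n ≤ r_n(β)] → exp(−e^{−β})` for all `β`, then `n X_n^d − n μ(X_n)^d` converges in
distribution to `α(Gu + log log 2)`, i.e. its cdf converges pointwise to
`x ↦ exp(−e^{−(β₀ + x/α)})` with `β₀ = −log log 2`. -/
theorem stmt5 {Ω : Type*} [MeasureSpace Ω] [IsProbabilityMeasure (ℙ : Measure Ω)]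
    (d : ℕ) (hd : 1 ≤ d) (α : ℝ) (hα : 0 < α)
    (r : ℕ → ℝ → ℝ) (hrpos : ∀ n β, 0 < r n β) (hrmono : ∀ n, StrictMono (r n))
    (X : ℕ → Ω → ℝ) (hXpos : ∀ n ω, 0 ≤ X n ω)
    (hdiff : ∀ β γ : ℝ, β < γ →
      Tendsto (fun n : ℕ => (n : ℝ) * (r n γ ^ d - r n β ^ d)) atTop
        (nhds (α * (γ - β))))
    (hcdf : ∀ β : ℝ,
      Tendsto (fun n : ℕ => (ℙ {ω | X n ω ≤ r n β}).toReal) atTop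
        (nhds (Real.exp (-Real.exp (-β))))) :
    ∀ x : ℝ,
      Tendsto (fun n : ℕ =>
          (ℙ {ω | (n : ℝ) * X n ω ^ d
              - (n : ℝ) * (sInf {t : ℝ | (1 : ℝ≥0∞) / 2 ≤ ℙ {ω' | X n ω' ≤ t}}) ^ d ≤ x}).toReal)
        atTop
        (nhds (Real.exp (-Real.exp (-(-Real.log (Real.log 2) + x / α))))) :=
  stmt5_general d α hα r hrpos X hXpos hdiff hcdf
end

section
/- Fix k ∈ ℕ and c > 0. For each n ≥ 1 let r be defined by n r^d = c log n, and suppose ν is a probability measure on a compact set A ⊂ ℝ^d satisfying ν(B_r(x)) ≥ 2δ₀ r^d for all x ∈ A and r ∈ (0,1], for some δ₀ with 2δ₀c > 1. Then n ∫_A Σ_{j=0}^{k−1} ((n ν(B_r(x)))^j / j!) exp(−n ν(B_r(x))) ν(dx) → 0 as n → ∞. In particular the expected number of k-isolated points tends to 0 at this radius scale. -/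
/-!
For `x ∈ A` the Poisson mean `t = n ν(B_r(x))` is at least `s = 2δ₀ c log n`, and as soon as
`k ≤ s` every term `t^j e^{-t} / j!` with `j < k` is at most `s^{k-1} e^{-s}`, because
`x ↦ x^j e^{-x}` decreases on `[j, ∞)`. Hence the integrand is at most `k s^{k-1} e^{-s}`, and
`n k s^{k-1} e^{-s} = k (2δ₀c log n)^{k-1} n^{1 - 2δ₀c} → 0`.
-/

open MeasureTheory Metric Filter Real

lemma pow_mul_exp_neg_le_of_le {m : ℕ} {s t : ℝ} (hs : 0 < s) (hms : (m : ℝ) ≤ s)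
    (hst : s ≤ t) : t ^ m * exp (-t) ≤ s ^ m * exp (-s) := by
  have hratio : (t / s) ^ m ≤ exp (t - s) := calc
    (t / s) ^ m ≤ exp (t / s - 1) ^ m := by
        gcongr
        · exact div_nonneg (hs.le.trans hst) hs.le
        · linarith [add_one_le_exp (t / s - 1)]
    _ = exp (m * (t / s - 1)) := (exp_nat_mul _ _).symm
    _ ≤ exp (t - s) := by
        gcongr
        have : (m : ℝ) * (t / s - 1) = m / s * (t - s) := by field_simp
        rw [this]
        exact mul_le_of_le_one_left (by linarith) ((div_le_one hs).2 hms)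
  calc t ^ m * exp (-t) = s ^ m * (t / s) ^ m * exp (-t) := by
        rw [← mul_pow, mul_div_cancel₀ _ hs.ne']
    _ ≤ s ^ m * exp (t - s) * exp (-t) := by gcongr
    _ = s ^ m * exp (-s) := by rw [mul_assoc, ← exp_add]; ring_nf

open Finset Nat in
lemma sum_range_pow_div_factorial_mul_exp_neg_le {k : ℕ} {s t : ℝ} (hks : (k : ℝ) ≤ s)
    (hst : s ≤ t) :
    ∑ j ∈ range k, t ^ j / (j ! : ℝ) * exp (-t) ≤ k * (s ^ (k - 1) * exp (-s)) := by
  have hterm : ∀ j ∈ range k, t ^ j / (j ! : ℝ) * exp (-t) ≤ s ^ (k - 1) * exp (-s) := by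
    intro j hj
    have hjk : j + 1 ≤ k := mem_range.1 hj
    have hjs : (j : ℝ) + 1 ≤ s := le_trans (by exact_mod_cast hjk) hks
    calc t ^ j / (j ! : ℝ) * exp (-t) ≤ t ^ j * exp (-t) := by
          gcongr
          exact div_le_self (pow_nonneg (by linarith) j) (by exact_mod_cast j.factorial_pos)
      _ ≤ s ^ j * exp (-s) := pow_mul_exp_neg_le_of_le (by linarith) (by linarith) hst
      _ ≤ s ^ (k - 1) * exp (-s) := by gcongr; exacts [by linarith, by omega]
  simpa using sum_le_card_nsmul _ _ _ hterm

open Finset Nat in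
lemma norm_setIntegral_sum_pow_div_factorial_mul_exp_neg_le {X : Type*} [MeasurableSpace X]
    {ν : Measure X} [IsProbabilityMeasure ν] {A : Set X} {f : X → ℝ} {k : ℕ} {s : ℝ}
    (hks : (k : ℝ) ≤ s) (hf : ∀ x ∈ A, s ≤ f x) :
    ‖∫ x in A, ∑ j ∈ range k, f x ^ j / (j ! : ℝ) * exp (-f x) ∂ν‖
      ≤ k * (s ^ (k - 1) * exp (-s)) := by
  have hs : 0 ≤ s := (Nat.cast_nonneg k).trans hks
  calc _ ≤ k * (s ^ (k - 1) * exp (-s)) * ν.real A := by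
        refine norm_setIntegral_le_of_norm_le_const (measure_lt_top ν A) fun x hx => ?_
        rw [Real.norm_of_nonneg (sum_nonneg fun j _ => by
          have := hs.trans (hf x hx); positivity)]
        exact sum_range_pow_div_factorial_mul_exp_neg_le hks (hf x hx)
    _ ≤ k * (s ^ (k - 1) * exp (-s)) := by
        apply mul_le_of_le_one_right (by positivity) measureReal_le_one

-- With `u = (a - 1) log n` the sequence is `(a / (a - 1)) ^ m u ^ m e^{-u}`.
lemma tendsto_natCast_mul_pow_mul_exp_neg_mul_log {a : ℝ} (ha : 1 < a) (m : ℕ) :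
    Tendsto (fun n : ℕ => (n : ℝ) * ((a * log n) ^ m * exp (-(a * log n)))) atTop (nhds 0) := by
  have ha' : 0 < a - 1 := by linarith
  have hu : Tendsto (fun n : ℕ => (a - 1) * log n) atTop atTop :=
    (tendsto_log_atTop.comp tendsto_natCast_atTop_atTop).const_mul_atTop ha'
  have hlim := ((tendsto_pow_mul_exp_neg_atTop_nhds_zero m).comp hu).const_mul ((a / (a - 1)) ^ m)
  rw [mul_zero] at hlim
  refine hlim.congr' ?_
  filter_upwards [eventually_ge_atTop 1] with n hn
  have hexp : exp (-((a - 1) * log n)) = n * exp (-(a * log n)) := by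
    rw [← exp_log (show (0 : ℝ) < n by exact_mod_cast hn), ← exp_add, log_exp]
    ring_nf
  have hpow : (a / (a - 1)) ^ m * ((a - 1) * log n) ^ m = (a * log n) ^ m := by
    rw [← mul_pow, ← mul_assoc, div_mul_cancel₀ _ ha'.ne']
  rw [Function.comp_apply, hexp, ← hpow]
  ring

lemma eventually_mul_le_natCast_mul_measure_closedBall {X : Type*} [PseudoMetricSpace X]
    [MeasurableSpace X] {ν : Measure X} {A : Set X} {d : ℕ} (hd : d ≠ 0) {c δ₀ : ℝ}
    (hc : 0 < c)
    (hlb : ∀ x ∈ A, ∀ r : ℝ, 0 < r → r ≤ 1 → 2 * δ₀ * r ^ d ≤ (ν (closedBall x r)).toReal) :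
    ∀ᶠ n : ℕ in atTop, ∀ x ∈ A, 2 * δ₀ * c * log n
      ≤ n * (ν (closedBall x ((c * log n / n) ^ ((1 : ℝ) / d)))).toReal := by
  have hlog : Tendsto (fun n : ℕ => log n) atTop atTop :=
    tendsto_log_atTop.comp tendsto_natCast_atTop_atTop
  have hsmall :=
    tendsto_natCast_atTop_atTop.eventually (isLittleO_log_id_atTop.bound (inv_pos.2 hc))
  filter_upwards [hlog.eventually_gt_atTop 0, hsmall, eventually_ge_atTop 1]
    with n hlogpos hlogle hn x hx
  have hn0 : (0 : ℝ) < n := by exact_mod_cast hn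
  have hvol : 0 < c * log n / n := by positivity
  have hvol1 : c * log n / n ≤ 1 := by
    rw [div_le_one hn0]
    rw [norm_of_nonneg hlogpos.le, id, norm_of_nonneg hn0.le] at hlogle
    rwa [← le_inv_mul_iff₀ hc]
  have hpow : ((c * log n / n) ^ ((1 : ℝ) / d)) ^ d = c * log n / n := by
    rw [one_div]; exact rpow_inv_natCast_pow hvol.le hd
  have hball := hlb x hx ((c * log n / n) ^ ((1 : ℝ) / d)) (rpow_pos_of_pos hvol _)
    (rpow_le_one hvol.le hvol1 (by positivity))
  rw [hpow] at hball
  calc 2 * δ₀ * c * log n = n * (2 * δ₀ * (c * log n / n)) := by field_simp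
    _ ≤ _ := by gcongr

theorem stmt9_general (d k : ℕ) (hd : 1 ≤ d) (c δ₀ : ℝ) (hc : 0 < c)
    (hδc : 1 < 2 * δ₀ * c)
    (A : Set (EuclideanSpace ℝ (Fin d)))
    (ν : Measure (EuclideanSpace ℝ (Fin d))) [IsProbabilityMeasure ν]
    (hlb : ∀ x ∈ A, ∀ r : ℝ, 0 < r → r ≤ 1 →
      2 * δ₀ * r ^ d ≤ (ν (closedBall x r)).toReal) :
    Tendsto (fun n : ℕ =>
        (n : ℝ) * ∫ x in A, ∑ j ∈ Finset.range k,
          ((n : ℝ) * (ν (closedBall x ((c * Real.log n / n) ^ ((1 : ℝ) / d)))).toReal) ^ j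
              / (Nat.factorial j)
            * Real.exp
              (-((n : ℝ) *
                (ν (closedBall x ((c * Real.log n / n) ^ ((1 : ℝ) / d)))).toReal)) ∂ν)
      atTop (nhds 0) := by
  have hlog : Tendsto (fun n : ℕ => log n) atTop atTop :=
    tendsto_log_atTop.comp tendsto_natCast_atTop_atTop
  refine squeeze_zero_norm' (a := fun n : ℕ => k * (n * ((2 * δ₀ * c * log n) ^ (k - 1)
    * exp (-(2 * δ₀ * c * log n))))) ?_ ?_
  · filter_upwards [eventually_mul_le_natCast_mul_measure_closedBall (by omega) hc hlb,
      hlog.eventually_ge_atTop (k / (2 * δ₀ * c))] with n hball hlogk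
    have hks : (k : ℝ) ≤ 2 * δ₀ * c * log n := (div_le_iff₀' (by linarith)).1 hlogk
    rw [norm_mul, Real.norm_natCast, mul_left_comm]
    gcongr
    exact norm_setIntegral_sum_pow_div_factorial_mul_exp_neg_le hks hball
  · simpa using (tendsto_natCast_mul_pow_mul_exp_neg_mul_log hδc (k - 1)).const_mul (k : ℝ)

/-- If `ν(B_r(x)) ≥ 2δ₀ r^d` on `A` for `r ∈ (0,1]`, with `2δ₀c > 1`, then taking the radius
`r_n = (c log n / n)^{1/d}` (so that `n r_n^d = c log n`), the expected number of `k`-isolated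
points, `n ∫_A Σ_{j<k} ((nν(B_{r_n}(x)))^j/j!) e^{−nν(B_{r_n}(x))} ν(dx)`, tends to `0`. -/
theorem stmt9 (d k : ℕ) (hd : 1 ≤ d) (hk : 1 ≤ k) (c δ₀ : ℝ) (hc : 0 < c) (hδ : 0 < δ₀)
    (hδc : 1 < 2 * δ₀ * c)
    (A : Set (EuclideanSpace ℝ (Fin d))) (hA : IsCompact A)
    (ν : Measure (EuclideanSpace ℝ (Fin d))) [IsProbabilityMeasure ν] (hAν : ν A = 1)
    (hlb : ∀ x ∈ A, ∀ r : ℝ, 0 < r → r ≤ 1 →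
      2 * δ₀ * r ^ d ≤ (ν (closedBall x r)).toReal) :
    Tendsto (fun n : ℕ =>
        (n : ℝ) * ∫ x in A, ∑ j ∈ Finset.range k,
          ((n : ℝ) * (ν (closedBall x ((c * Real.log n / n) ^ ((1 : ℝ) / d)))).toReal) ^ j
              / (Nat.factorial j)
            * Real.exp
              (-((n : ℝ) *
                (ν (closedBall x ((c * Real.log n / n) ^ ((1 : ℝ) / d)))).toReal)) ∂ν)
      atTop (nhds 0) :=
  stmt9_general d k hd c δ₀ hc hδc A ν hlb
end

section
/- Suppose G(X,r) is a geometric graph on a finite set X ⊂ ℝ^d with |X| ≥ k+2 and L_k(X) ≤ r < M_k(X). Then there exists a (k−1)-separating pair (Y, Y′) for G(X,r) in which neither Y nor Y′ is a singleton. -/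
open scoped Classical

noncomputable section

/-- The geometric graph `G(X,r)`. -/
def geoGraph {d : ℕ} (X : Finset (EuclideanSpace ℝ (Fin d))) (r : ℝ) :
    SimpleGraph {x // x ∈ X} where
  Adj a b := a ≠ b ∧ dist (a : EuclideanSpace ℝ (Fin d)) (b : EuclideanSpace ℝ (Fin d)) ≤ r
  symm := ⟨fun a b h => ⟨h.1.symm, by rw [dist_comm]; exact h.2⟩⟩
  loopless := ⟨fun a h => h.1 rfl⟩

/-- `G(X,r)` is `k`-connected. -/
def kConnected {d : ℕ} (k : ℕ) (X : Finset (EuclideanSpace ℝ (Fin d))) (r : ℝ) : Prop :=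
  ∀ S : Finset (EuclideanSpace ℝ (Fin d)), S ⊆ X → S.card ≤ k - 1 →
    (geoGraph (X \ S) r).Connected

/-- The `k`-connectivity threshold `M_k(X)`. -/
def connThreshold {d : ℕ} (k : ℕ) (X : Finset (EuclideanSpace ℝ (Fin d))) : ℝ :=
  sInf {r : ℝ | 0 < r ∧ kConnected k X r}

/-- The largest `k`-nearest-neighbour link `L_k(X)`. -/
def nnLink {d : ℕ} (k : ℕ) (X : Finset (EuclideanSpace ℝ (Fin d))) : ℝ :=
  if h : k + 1 ≤ X.card then
    X.sup' (Finset.card_pos.mp (lt_of_lt_of_le (Nat.succ_pos k) h))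
      (fun x => sInf {r : ℝ | 0 < r ∧ k < (X.filter (fun y => dist y x ≤ r)).card})
  else 0

/-- `(Y, Y')` is a `j`-separating pair for `G(X,r)`: disjoint nonempty subsets of `X`,
each inducing a connected geometric graph, whose union induces a disconnected graph, with
at most `j` points of `X \ (Y ∪ Y')` within distance `r` of `Y ∪ Y'`. -/
def sepPair {d : ℕ} (X : Finset (EuclideanSpace ℝ (Fin d))) (r : ℝ) (j : ℕ)
    (Y Y' : Finset (EuclideanSpace ℝ (Fin d))) : Prop :=
  Y ⊆ X ∧ Y' ⊆ X ∧ Disjoint Y Y' ∧ Y.Nonempty ∧ Y'.Nonempty ∧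
    (geoGraph Y r).Connected ∧ (geoGraph Y' r).Connected ∧
    ¬ (geoGraph (Y ∪ Y') r).Connected ∧
    ((X \ (Y ∪ Y')).filter (fun z => ∃ w ∈ Y ∪ Y', dist z w ≤ r)).card ≤ j

/-!
Since `r < M_k(X)`, some set `S` of at most `k - 1` points disconnects `G(X \ S, r)`; two of
its components form a separating pair whose boundary lies in `S`. A singleton component `{a}`
would have all of its at least `k` neighbours (`L_k(X) ≤ r`) in that boundary, which is too
small.
-/

namespace Finset

lemma lt_card_filter_le_of_sInf_le {α : Type*} {s : Finset α} {f : α → ℝ} {k : ℕ}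
    {r : ℝ} (hs : k < #s) (h : sInf {ρ : ℝ | 0 < ρ ∧ k < #(s.filter (fun y => f y ≤ ρ))} ≤ r) :
    k < #(s.filter (fun y => f y ≤ r)) := by
  by_contra! hle
  have hfar : (s.filter (fun y => r < f y)).Nonempty := by
    by_contra! hempty
    have : s.filter (fun y => f y ≤ r) = s :=
      filter_true_of_mem fun y hy => not_lt.mp (filter_eq_empty_iff.mp hempty hy)
    rw [this] at hle
    omega
  obtain ⟨m, hm, hmin⟩ := exists_min_image _ f hfar
  obtain ⟨M, -, hmax⟩ := exists_max_image s f (card_pos.mp (by omega))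
  have hT : max 1 (f M) ∈ {ρ : ℝ | 0 < ρ ∧ k < #(s.filter (fun y => f y ≤ ρ))} := by
    refine ⟨lt_max_of_lt_left one_pos, ?_⟩
    rwa [filter_true_of_mem fun y hy => (hmax y hy).trans (le_max_right _ _)]
  -- a radius below `f m` captures no more points than `r` does
  have hbound : f m ≤ sInf {ρ : ℝ | 0 < ρ ∧ k < #(s.filter (fun y => f y ≤ ρ))} := by
    refine le_csInf ⟨_, hT⟩ fun ρ ⟨_, hρ⟩ => ?_
    by_contra! hρm
    have hsub : s.filter (fun y => f y ≤ ρ) ⊆ s.filter (fun y => f y ≤ r) := by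
      intro y hy
      obtain ⟨hys, hyρ⟩ := mem_filter.mp hy
      refine mem_filter.mpr ⟨hys, ?_⟩
      by_contra! hry
      exact (hyρ.trans_lt hρm).not_ge (hmin y (mem_filter.mpr ⟨hys, hry⟩))
    exact (hρ.trans_le (card_le_card hsub)).not_ge hle
  linarith [(mem_filter.mp hm).2]

end Finset

namespace GeoGraph

open Finset

variable {d : ℕ} {X A Y Y' : Finset (EuclideanSpace ℝ (Fin d))} {r : ℝ}

def boundary (X : Finset (EuclideanSpace ℝ (Fin d))) (r : ℝ)
    (B : Finset (EuclideanSpace ℝ (Fin d))) : Finset (EuclideanSpace ℝ (Fin d)) :=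
  (X \ B).filter (fun z => ∃ w ∈ B, dist z w ≤ r)

lemma adj_iff {a b : {x // x ∈ A}} :
    (geoGraph A r).Adj a b ↔ a.1 ≠ b.1 ∧ dist a.1 b.1 ≤ r :=
  Subtype.coe_ne_coe.symm.and Iff.rfl

lemma not_connected_union (hYY' : Disjoint Y Y') (hY : Y.Nonempty) (hY' : Y'.Nonempty)
    (hfar : ∀ y ∈ Y, ∀ y' ∈ Y', r < dist y y') : ¬ (geoGraph (Y ∪ Y') r).Connected := by
  intro hconn
  obtain ⟨a, ha⟩ := hY
  obtain ⟨b, hb⟩ := hY'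
  obtain ⟨p⟩ := hconn.preconnected ⟨a, mem_union_left _ ha⟩ ⟨b, mem_union_right _ hb⟩
  obtain ⟨e, -, he, he'⟩ :=
    p.exists_boundary_dart {v | v.1 ∈ Y} ha (disjoint_right.mp hYY' hb)
  have heY' : e.snd.1 ∈ Y' := (mem_union.mp e.snd.2).resolve_left he'
  exact (hfar _ he _ heY').not_ge (adj_iff.mp e.adj).2

def componentFinset (A : Finset (EuclideanSpace ℝ (Fin d))) (r : ℝ) (a : {x // x ∈ A}) :
    Finset (EuclideanSpace ℝ (Fin d)) :=
  A.filter (fun x => ∃ h : x ∈ A, (geoGraph A r).Reachable a ⟨x, h⟩)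

section Component

variable {a b : {x // x ∈ A}} {x y z : EuclideanSpace ℝ (Fin d)}

lemma mem_componentFinset :
    x ∈ componentFinset A r a ↔ ∃ h : x ∈ A, (geoGraph A r).Reachable a ⟨x, h⟩ :=
  mem_filter.trans ⟨And.right, fun h => ⟨h.1, h⟩⟩

lemma componentFinset_subset : componentFinset A r a ⊆ A :=
  filter_subset _ _

lemma self_mem_componentFinset : a.1 ∈ componentFinset A r a :=
  mem_componentFinset.mpr ⟨a.2, .rfl⟩

lemma mem_componentFinset_of_dist_le (hy : y ∈ componentFinset A r a) (hz : z ∈ A)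
    (hzy : dist z y ≤ r) : z ∈ componentFinset A r a := by
  obtain ⟨hyA, hay⟩ := mem_componentFinset.mp hy
  obtain rfl | hne := eq_or_ne z y
  · exact hy
  have hyz : (geoGraph A r).Adj ⟨y, hyA⟩ ⟨z, hz⟩ := adj_iff.mpr ⟨hne.symm, by rwa [dist_comm]⟩
  exact mem_componentFinset.mpr ⟨hz, hay.trans hyz.reachable⟩

lemma disjoint_componentFinset (hab : ¬ (geoGraph A r).Reachable a b) :
    Disjoint (componentFinset A r a) (componentFinset A r b) :=
  disjoint_left.mpr fun _ hxa hxb => by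
    obtain ⟨_, hax⟩ := mem_componentFinset.mp hxa
    obtain ⟨_, hbx⟩ := mem_componentFinset.mp hxb
    exact hab (hax.trans hbx.symm)

lemma lt_dist_of_mem_componentFinset (hab : ¬ (geoGraph A r).Reachable a b)
    (hy : y ∈ componentFinset A r a) (hz : z ∈ componentFinset A r b) : r < dist y z := by
  by_contra! hyz
  exact disjoint_left.mp (disjoint_componentFinset hab) hy
    (mem_componentFinset_of_dist_le hz (componentFinset_subset hy) hyz)

lemma reachable_of_walk_componentFinset {u v : {x // x ∈ A}} (p : (geoGraph A r).Walk u v)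
    (hu : u.1 ∈ componentFinset A r a) :
    ∃ hv : v.1 ∈ componentFinset A r a,
      (geoGraph (componentFinset A r a) r).Reachable ⟨u.1, hu⟩ ⟨v.1, hv⟩ := by
  induction p with
  | nil => exact ⟨hu, .rfl⟩
  | @cons u w v huw _ ih =>
    have hw : w.1 ∈ componentFinset A r a :=
      mem_componentFinset_of_dist_le hu w.2 (by rw [dist_comm]; exact (adj_iff.mp huw).2)
    obtain ⟨hv, hwv⟩ := ih hw
    have huw' : (geoGraph (componentFinset A r a) r).Adj ⟨u.1, hu⟩ ⟨w.1, hw⟩ :=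
      adj_iff.mpr (adj_iff.mp huw :)
    exact ⟨hv, huw'.reachable.trans hwv⟩

lemma connected_componentFinset : (geoGraph (componentFinset A r a) r).Connected := by
  have hub : ∀ v : {x // x ∈ componentFinset A r a},
      (geoGraph (componentFinset A r a) r).Reachable ⟨a.1, self_mem_componentFinset⟩ v := by
    rintro ⟨x, hx⟩
    obtain ⟨_, ⟨p⟩⟩ := mem_componentFinset.mp hx
    exact (reachable_of_walk_componentFinset p self_mem_componentFinset).2
  exact (SimpleGraph.connected_iff _).mpr
    ⟨fun u v => (hub u).symm.trans (hub v), ⟨_, self_mem_componentFinset⟩⟩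

lemma boundary_componentFinset_subset {S : Finset (EuclideanSpace ℝ (Fin d))}
    {a b : {x // x ∈ X \ S}} :
    boundary X r (componentFinset (X \ S) r a ∪ componentFinset (X \ S) r b) ⊆ S := by
  intro z hz
  obtain ⟨hzX, hzY⟩ := mem_sdiff.mp (mem_filter.mp hz).1
  obtain ⟨w, hw, hzw⟩ := (mem_filter.mp hz).2
  by_contra hzS
  have hz' : z ∈ X \ S := mem_sdiff.mpr ⟨hzX, hzS⟩
  rcases mem_union.mp hw with hw | hw
  · exact hzY (mem_union_left _ (mem_componentFinset_of_dist_le hw hz' hzw))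
  · exact hzY (mem_union_right _ (mem_componentFinset_of_dist_le hw hz' hzw))

end Component

variable {k : ℕ}

lemma lt_card_filter_dist_le_of_nnLink_le {x : EuclideanSpace ℝ (Fin d)} (hX : k < #X)
    (hL : nnLink k X ≤ r) (hx : x ∈ X) : k < #(X.filter (fun y => dist y x ≤ r)) := by
  rw [nnLink, dif_pos (Nat.succ_le_of_lt hX)] at hL
  exact lt_card_filter_le_of_sInf_le hX ((le_sup' _ hx).trans hL)

lemma not_kConnected_of_lt_connThreshold (hr : 0 < r) (hM : r < connThreshold k X) :
    ¬ kConnected k X r :=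
  fun h => hM.not_ge (csInf_le ⟨0, fun _ hρ => hρ.1.le⟩ ⟨hr, h⟩)

lemma exists_not_reachable_of_not_kConnected (hX : k < #X) (h : ¬ kConnected k X r) :
    ∃ S : Finset (EuclideanSpace ℝ (Fin d)), #S ≤ k - 1 ∧
      ∃ a b : {x // x ∈ X \ S}, ¬ (geoGraph (X \ S) r).Reachable a b := by
  simp only [kConnected, not_forall] at h
  obtain ⟨S, hSX, hS, hdisconn⟩ := h
  refine ⟨S, hS, ?_⟩
  have hne : (X \ S).Nonempty := by
    rw [← card_pos, card_sdiff_of_subset hSX]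
    have := card_le_card hSX
    omega
  by_contra! hreach
  exact hdisconn ((SimpleGraph.connected_iff _).mpr ⟨hreach, ⟨_, hne.choose_spec⟩⟩)

lemma sepPair_componentFinset {S : Finset (EuclideanSpace ℝ (Fin d))} {j : ℕ} (hS : #S ≤ j)
    {a b : {x // x ∈ X \ S}} (hab : ¬ (geoGraph (X \ S) r).Reachable a b) :
    sepPair X r j (componentFinset (X \ S) r a) (componentFinset (X \ S) r b) :=
  ⟨componentFinset_subset.trans sdiff_subset, componentFinset_subset.trans sdiff_subset,
    disjoint_componentFinset hab, ⟨_, self_mem_componentFinset⟩, ⟨_, self_mem_componentFinset⟩,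
    connected_componentFinset, connected_componentFinset,
    not_connected_union (disjoint_componentFinset hab) ⟨_, self_mem_componentFinset⟩
      ⟨_, self_mem_componentFinset⟩ fun _ hy _ hz => lt_dist_of_mem_componentFinset hab hy hz,
    (card_le_card boundary_componentFinset_subset).trans hS⟩

lemma two_le_card_of_lt_dist {a : EuclideanSpace ℝ (Fin d)} (hk : 1 ≤ k)
    (hdeg : k < #(X.filter (fun y => dist y a ≤ r))) (ha : a ∈ Y)
    (hfar : ∀ y' ∈ Y', r < dist a y') (hB : #(boundary X r (Y ∪ Y')) ≤ k - 1) : 2 ≤ #Y := by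
  have hsub : X.filter (fun y => dist y a ≤ r) ⊆ Y ∪ boundary X r (Y ∪ Y') := by
    intro y hy
    obtain ⟨hyX, hya⟩ := mem_filter.mp hy
    by_cases hyY : y ∈ Y
    · exact mem_union_left _ hyY
    have hyY' : y ∉ Y' := fun h => (hfar y h).not_ge (by rwa [dist_comm])
    exact mem_union_right _ (mem_filter.mpr
      ⟨mem_sdiff.mpr ⟨hyX, by simp [hyY, hyY']⟩, a, mem_union_left _ ha, hya⟩)
  have := (card_le_card hsub).trans (card_union_le _ _)
  omega

lemma two_le_card_componentFinset {S : Finset (EuclideanSpace ℝ (Fin d))} (hk : 1 ≤ k)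
    (hS : #S ≤ k - 1) {a b : {x // x ∈ X \ S}} (hab : ¬ (geoGraph (X \ S) r).Reachable a b)
    (hdeg : k < #(X.filter (fun y => dist y a.1 ≤ r))) :
    2 ≤ #(componentFinset (X \ S) r a) :=
  two_le_card_of_lt_dist hk hdeg self_mem_componentFinset
    (fun _ hy' => lt_dist_of_mem_componentFinset hab self_mem_componentFinset hy')
    ((card_le_card boundary_componentFinset_subset).trans hS)

end GeoGraph

open GeoGraph in
/-- If `|X| ≥ k+2` and `L_k(X) ≤ r < M_k(X)`, then `G(X,r)` has a `(k−1)`-separating pair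
in which neither set is a singleton. -/
theorem stmt15 {d : ℕ} (k : ℕ) (hk : 1 ≤ k) (X : Finset (EuclideanSpace ℝ (Fin d)))
    (r : ℝ) (hr : 0 < r) (hcard : k + 2 ≤ X.card)
    (hL : nnLink k X ≤ r) (hM : r < connThreshold k X) :
    ∃ Y Y', sepPair X r (k - 1) Y Y' ∧ 2 ≤ Y.card ∧ 2 ≤ Y'.card := by
  have hX : k < X.card := by omega
  obtain ⟨S, hS, a, b, hab⟩ :=
    exists_not_reachable_of_not_kConnected hX (not_kConnected_of_lt_connThreshold hr hM)
  have hdeg (x : {x // x ∈ X \ S}) : k < (X.filter (fun y => dist y x.1 ≤ r)).card :=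
    lt_card_filter_dist_le_of_nnLink_le hX hL (Finset.mem_sdiff.mp x.2).1
  exact ⟨_, _, sepPair_componentFinset hS hab, two_le_card_componentFinset hk hS hab (hdeg a),
    two_le_card_componentFinset hk hS (fun hba => hab hba.symm) (hdeg b)⟩
end
end
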